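/- Let μ⁺, μ⁻ be given by a 2-additive decomposition in which a⁺_{j|k} = a⁻_{j|k} = 0 for all ordered pairs (j,k) with j ≠ k, a_j⁺ = a_j⁻ = a_j for all j ∈ J, and a_{jk}⁺ = a_{jk}⁻ = a_{jk} for all unordered pairs {j,k}, and assume Σ_{j∈J} a_j + Σ_{{j,k}⊆J} a_{jk} = 1 and a_j + Σ_{k∈C} a_{jk} ≥ 0 for every j ∈ J and every C ⊆ J∖{j}. Define μ : 2^J → ℝ by μ(C) = Σ_{j∈C} a_j + Σ_{{j,k}⊆C} a_{jk}, and let μ̂(C,D) = μ⁺(C,D) − μ⁻(C,D). Then μ(∅) = 0, μ(J) = 1, μ(A) ≤ μ(B) whenever A ⊆ B ⊆ J, and for every x ∈ [−1,1]^n, Ch^B(x,μ̂) = ∫₀¹ μ({j ∈ J : x_j > t}) dt − ∫₀¹ μ({j ∈ J : x_j < −t}) dt, i.e. the bipolar Choquet integral reduces to the symmetric Choquet integral with a common capacity μ. -/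

import Mathlib

/-- The bipolar Choquet integral of `x` with respect to `μ`:
`∫₀¹ μ({j : x j > t}, {j : x j < -t}) dt`. The same formula is used for
`Ch^B`, `Ch^{B+}` and `Ch^{B-}` (with `μ̂`, `μ⁺`, `μ⁻` respectively). -/
noncomputable def ChB {n : ℕ} (μ : Finset (Fin n) → Finset (Fin n) → ℝ)
    (x : Fin n → ℝ) : ℝ :=
  ∫ t in (0:ℝ)..1,
    μ (Finset.univ.filter (fun j => t < x j)) (Finset.univ.filter (fun j => x j < -t))

/-- Sum of a symmetric coefficient family over the unordered pairs `{j,k} ⊆ C`, `j ≠ k`. -/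
noncomputable def pairSum {n : ℕ} (a : Fin n → Fin n → ℝ) (C : Finset (Fin n)) : ℝ :=
  (∑ p ∈ C.offDiag, a p.1 p.2) / 2

/-- `μ⁺(C,D) = Σ_{j∈C} a_j⁺ + Σ_{{j,k}⊆C} a_{jk}⁺ + Σ_{j∈C,k∈D} a⁺_{j|k}`. -/
noncomputable def muPlus {n : ℕ} (ap : Fin n → ℝ) (aps apo : Fin n → Fin n → ℝ)
    (C D : Finset (Fin n)) : ℝ :=
  ∑ j ∈ C, ap j + pairSum aps C + ∑ j ∈ C, ∑ k ∈ D, apo j k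

/-- `μ⁻(C,D) = Σ_{j∈D} a_j⁻ + Σ_{{j,k}⊆D} a_{jk}⁻ + Σ_{j∈C,k∈D} a⁻_{j|k}`. -/
noncomputable def muMinus {n : ℕ} (am : Fin n → ℝ) (ams amo : Fin n → Fin n → ℝ)
    (C D : Finset (Fin n)) : ℝ :=
  ∑ j ∈ D, am j + pairSum ams D + ∑ j ∈ C, ∑ k ∈ D, amo j k

/-!
Without interaction coefficients `a_{j|k}`, `μ⁺(C,D) - μ⁻(C,D)` splits as `μ(C) - μ(D)`, so the
bipolar integrand is the difference of `t ↦ μ{x > t}` and `t ↦ μ{x < -t}`. Adding `j ∉ C` to `C`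
raises `μ` by `a_j + Σ_{k∈C} a_{jk} ≥ 0`, so `μ` is monotone; both integrands are then antitone in
`t`, hence interval integrable, and the integral of the difference splits.
-/

open Finset

section PairSum

variable {n : ℕ} {as : Fin n → Fin n → ℝ}

lemma pairSum_empty : pairSum as ∅ = 0 := by
  simp [pairSum]

lemma pairSum_insert (hsym : ∀ j k, as j k = as k j) {j : Fin n} {C : Finset (Fin n)}
    (hj : j ∉ C) : pairSum as (insert j C) = pairSum as C + ∑ k ∈ C, as j k := by
  have hleft : ∑ p ∈ {j} ×ˢ C, as p.1 p.2 = ∑ k ∈ C, as j k := by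
    rw [sum_product, sum_singleton]
  have hright : ∑ p ∈ C ×ˢ {j}, as p.1 p.2 = ∑ k ∈ C, as j k := by
    rw [sum_product]
    exact sum_congr rfl fun k _ => by rw [sum_singleton, hsym]
  have hdisj₁ : Disjoint C.offDiag ({j} ×ˢ C) :=
    disjoint_left.2 fun p hp hq =>
      hj (mem_singleton.1 (mem_product.1 hq).1 ▸ (mem_offDiag.1 hp).1)
  have hdisj₂ : Disjoint (C.offDiag ∪ {j} ×ˢ C) (C ×ˢ {j}) :=
    disjoint_union_left.2
      ⟨disjoint_left.2 fun p hp hq =>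
          hj (mem_singleton.1 (mem_product.1 hq).2 ▸ (mem_offDiag.1 hp).2.1),
        disjoint_left.2 fun p hp hq =>
          hj (mem_singleton.1 (mem_product.1 hp).1 ▸ (mem_product.1 hq).1)⟩
  unfold pairSum
  rw [offDiag_insert hj, sum_union hdisj₂, sum_union hdisj₁, hleft, hright]
  ring

lemma monotone_sum_add_pairSum (a : Fin n → ℝ) (hsym : ∀ j k, as j k = as k j)
    (hmonocoef : ∀ (j : Fin n) (C : Finset (Fin n)), j ∉ C → 0 ≤ a j + ∑ k ∈ C, as j k) :
    Monotone fun C : Finset (Fin n) => ∑ j ∈ C, a j + pairSum as C := by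
  refine monotone_iff_forall_le_insert.2 fun C j hj => ?_
  have := hmonocoef j C hj
  rw [sum_insert hj, pairSum_insert hsym hj]
  linarith

lemma muPlus_sub_muMinus_of_zero (a : Fin n → ℝ) (C D : Finset (Fin n)) :
    muPlus a as (fun _ _ => 0) C D - muMinus a as (fun _ _ => 0) C D =
      (∑ j ∈ C, a j + pairSum as C) - (∑ j ∈ D, a j + pairSum as D) := by
  simp [muPlus, muMinus]

end PairSum

section Choquet

variable {n : ℕ}

lemma antitone_filter_lt (x : Fin n → ℝ) :
    Antitone fun t : ℝ => univ.filter fun j => t < x j :=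
  fun _ _ hst _ => by simpa using hst.trans_lt

lemma antitone_filter_lt_neg (x : Fin n → ℝ) :
    Antitone fun t : ℝ => univ.filter fun j => x j < -t :=
  fun _ _ hst _ => by simpa using fun h => h.trans_le (neg_le_neg hst)

theorem ChB_sub_eq_of_monotone {μ : Finset (Fin n) → ℝ} (hμ : Monotone μ) (x : Fin n → ℝ) :
    ChB (fun C D => μ C - μ D) x =
      (∫ t in (0:ℝ)..1, μ (univ.filter fun j => t < x j))
        - ∫ t in (0:ℝ)..1, μ (univ.filter fun j => x j < -t) :=
  intervalIntegral.integral_sub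
    (hμ.comp_antitone (antitone_filter_lt x)).intervalIntegrable
    (hμ.comp_antitone (antitone_filter_lt_neg x)).intervalIntegrable

end Choquet

theorem stmt_19_general {n : ℕ}
    (a : Fin n → ℝ) (as : Fin n → Fin n → ℝ)
    (hsym : ∀ j k, as j k = as k j)
    (hnorm : ∑ j, a j + pairSum as Finset.univ = 1)
    (hmonocoef : ∀ (j : Fin n) (C : Finset (Fin n)), j ∉ C →
        0 ≤ a j + ∑ k ∈ C, as j k)
    (μ : Finset (Fin n) → ℝ)
    (hμdef : ∀ C : Finset (Fin n), μ C = ∑ j ∈ C, a j + pairSum as C) :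
    μ ∅ = 0 ∧ μ Finset.univ = 1 ∧
    (∀ A B : Finset (Fin n), A ⊆ B → μ A ≤ μ B) ∧
    (∀ x : Fin n → ℝ, (∀ j, x j ∈ Set.Icc (-1:ℝ) 1) →
      ChB (fun C D => muPlus a as (fun _ _ => 0) C D
          - muMinus a as (fun _ _ => 0) C D) x =
        (∫ t in (0:ℝ)..1, μ (Finset.univ.filter (fun j => t < x j)))
          - ∫ t in (0:ℝ)..1, μ (Finset.univ.filter (fun j => x j < -t))) := by
  obtain rfl : μ = fun C => ∑ j ∈ C, a j + pairSum as C := funext hμdef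
  have hmono := monotone_sum_add_pairSum a hsym hmonocoef
  refine ⟨by simp [pairSum_empty], hnorm, fun _ _ => (hmono ·), fun x _ => ?_⟩
  simp_rw [muPlus_sub_muMinus_of_zero]
  exact ChB_sub_eq_of_monotone hmono x

theorem stmt_19 {n : ℕ} (hn : 1 ≤ n)
    (a : Fin n → ℝ) (as : Fin n → Fin n → ℝ)
    (ha : ∀ j, 0 ≤ a j)
    (hsym : ∀ j k, as j k = as k j)
    (hnorm : ∑ j, a j + pairSum as Finset.univ = 1)
    (hmonocoef : ∀ (j : Fin n) (C : Finset (Fin n)), j ∉ C →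
        0 ≤ a j + ∑ k ∈ C, as j k)
    (μ : Finset (Fin n) → ℝ)
    (hμdef : ∀ C : Finset (Fin n), μ C = ∑ j ∈ C, a j + pairSum as C) :
    μ ∅ = 0 ∧ μ Finset.univ = 1 ∧
    (∀ A B : Finset (Fin n), A ⊆ B → μ A ≤ μ B) ∧
    (∀ x : Fin n → ℝ, (∀ j, x j ∈ Set.Icc (-1:ℝ) 1) →
      ChB (fun C D => muPlus a as (fun _ _ => 0) C D
          - muMinus a as (fun _ _ => 0) C D) x =
        (∫ t in (0:ℝ)..1, μ (Finset.univ.filter (fun j => t < x j)))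
          - ∫ t in (0:ℝ)..1, μ (Finset.univ.filter (fun j => x j < -t))) :=
  stmt_19_general a as hsym hnorm hmonocoef μ hμdef
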